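/- arXiv:2107.12054 — 4 statements merged into one kernel-verified Lean document; each statement's English description precedes it below -/
import Mathlib

section
/- Fix the data of a generalized Bott manifold and line bundle, i.e. integers {c_{i,j}^{(k)}} and {ℓ_j} as below. In the group ring ℤ[ℤ^{N+1}] one has D_1 D_2 ⋯ D_m(λ^{e_{m+1}}) = Σ_{x ∈ C ∩ ℤ^N} ρ(x) · λ^{x + e_{m+1}}, where each lattice point x = (x_{i,k}) ∈ ℤ^N is identified with Σ_{i,k} x_{i,k} e_{i,k} ∈ ℤ^{N+1}; in particular the sum on the right has only finitely many nonzero terms. (This is the combinatorial content of the paper's two main theorems: the Demazure-type character D_1⋯D_m(λ^{e_{m+1}}) equals the signed enumeration, by the density function, of the lattice points of the generalized twisted cube.) -/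
/-!
Generalized Bott manifold data: `m ≥ 1`, block sizes `n : Fin m → ℕ` (each ≥ 1),
integers `ℓ : Fin m → ℤ` and `c i j k` (used only for `i < j`).
The lattice `ℤ^{N+1}` is realized as functions `((Σ i, Fin (n i)) ⊕ Unit) → ℤ`,
with standard basis `E p`; `E (Sum.inr ())` is `e_{m+1}`.
-/

noncomputable section

namespace GB

variable (m : ℕ) (n : Fin m → ℕ)

/-- The double-index set for the coordinates `x_{i,k}`, `1 ≤ i ≤ m`, `1 ≤ k ≤ n_i`. -/
abbrev J : Type := Σ i : Fin m, Fin (n i)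

/-- The lattice `ℤ^{N+1}`. -/
abbrev L : Type := (J m n ⊕ Unit) → ℤ

/-- Standard basis vector of `ℤ^{N+1}`. -/
def E (p : J m n ⊕ Unit) : L m n := fun q => if q = p then 1 else 0

/-- The basis element `λ^μ` of the group ring `ℤ[ℤ^{N+1}]`. -/
def lam (μ : L m n) : AddMonoidAlgebra ℤ (L m n) := AddMonoidAlgebra.single μ 1

/-- `⟨x, e_i⟩ = Σ_k x_k e_{i,k}`. -/
def emb (i : Fin m) (z : Fin (n i) → ℤ) : L m n :=
  ∑ k : Fin (n i), z k • E m n (Sum.inl ⟨i, k⟩)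

variable (ℓ : Fin m → ℤ) (c : (i j : Fin m) → Fin (n j) → ℤ)

/-- `k_i(μ) = ℓ_i + Σ_{j=i+1}^m Σ_{k=1}^{n_j} c_{i,j}^{(k)} μ_{j,k}`. -/
def kfun (i : Fin m) (μ : L m n) : ℤ :=
  ℓ i + ∑ j : Fin m, ∑ k : Fin (n j), if i < j then c i j k * μ (Sum.inl ⟨j, k⟩) else 0

/-- `Δ⁻_{n,r} = {z ∈ ℤ_{≤0}^n : z_1 + ⋯ + z_n = -r}`. -/
def DeltaMinus (nn : ℕ) (r : ℤ) : Set (Fin nn → ℤ) :=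
  {z | (∀ j, z j ≤ 0) ∧ ∑ j, z j = -r}

/-- `Δ⁺_{n,r} = {z ∈ ℤ_{>0}^n : z_1 + ⋯ + z_n = r - 1}`. -/
def DeltaPlus (nn : ℕ) (r : ℤ) : Set (Fin nn → ℤ) :=
  {z | (∀ j, 0 < z j) ∧ ∑ j, z j = r - 1}

/-- The value of the operator `D_i` on the basis element `λ^μ`. -/
def Dsingle (i : Fin m) (μ : L m n) : AddMonoidAlgebra ℤ (L m n) :=
  if 0 ≤ kfun m n ℓ c i μ then
    ∑ r ∈ Finset.Icc (0 : ℤ) (kfun m n ℓ c i μ),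
      ∑ᶠ z ∈ DeltaMinus (n i) r, lam m n (μ + emb m n i z)
  else if -(n i : ℤ) ≤ kfun m n ℓ c i μ then 0
  else
    ∑ r ∈ Finset.Icc ((n i : ℤ) + 1) (-(kfun m n ℓ c i μ)),
      ∑ᶠ z ∈ DeltaPlus (n i) r, ((-1) ^ (n i) : ℤ) • lam m n (μ + emb m n i z)

/-- The ℤ-linear operator `D_i` on `ℤ[ℤ^{N+1}]`, extending `λ^μ ↦ Dsingle i μ`. -/
def Dop (i : Fin m) (f : AddMonoidAlgebra ℤ (L m n)) : AddMonoidAlgebra ℤ (L m n) :=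
  Finsupp.sum f.coeff fun μ a => a • Dsingle m n ℓ c i μ

/-- `A_i(x)`; for `i = m` the inner sum is empty, so `A_m(x) = -ℓ_m`. -/
def A (x : J m n → ℝ) (i : Fin m) : ℝ :=
  -(ℓ i + ∑ j : Fin m, ∑ k : Fin (n j), if i < j then (c i j k : ℝ) * x ⟨j, k⟩ else 0)

/-- The generalized twisted cube `C ⊆ ℝ^N`. -/
def C : Set (J m n → ℝ) :=
  {x | ∀ i : Fin m,
    (A m n ℓ c x i ≤ ∑ k, x ⟨i, k⟩ ∧ (∑ k, x ⟨i, k⟩) ≤ 0 ∧ ∀ k, x ⟨i, k⟩ ≤ 0) ∨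
    (0 < ∑ k, x ⟨i, k⟩ ∧ (∑ k, x ⟨i, k⟩) < A m n ℓ c x i ∧ ∀ k, 0 < x ⟨i, k⟩)}

/-- `sgn(t) = 1` if `t > 0`, `-1` if `t ≤ 0` (real argument). -/
def sgnR (t : ℝ) : ℤ := if 0 < t then 1 else -1

/-- `sgn(t) = 1` if `t > 0`, `-1` if `t ≤ 0` (integer argument). -/
def sgnZ (t : ℤ) : ℤ := if 0 < t then 1 else -1

open Classical in
/-- The density function `ρ` of the generalized twisted cube. -/
def rho (x : J m n → ℝ) : ℤ :=
  if x ∈ C m n ℓ c then (-1) ^ (∑ i, n i) * ∏ p : J m n, sgnR (x p) else 0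

end GB

end

/-!
For `μ` supported on the blocks after `i`, `D_i λ^μ` is the signed sum of `λ^(μ + ⟨z, e_i⟩)` over
the integer points `z` of the `i`-th fibre of the twisted cube, `(A_i ≤ Σ z ≤ 0, z ≤ 0)` or
`(0 < Σ z < A_i, z > 0)`, with sign `(-1)^{n_i}` on the positive part: the three cases in the
definition of `D_i` sort these points by the value of `Σ z`. Since `A_i` only depends on the later
blocks, applying `D_m, …, D_1` in turn fills in the lattice points of `C` one block at a time, and
the signs multiply up to `ρ`.
-/

namespace GB

open Finset

section Block

variable {nn : ℕ} {z : Fin nn → ℤ}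

/-- The integer points of a fibre of the twisted cube in one block, where `A_i = -k`. -/
def blockSet (nn : ℕ) (k : ℤ) : Set (Fin nn → ℤ) :=
  {z | (-k ≤ ∑ j, z j ∧ ∑ j, z j ≤ 0 ∧ ∀ j, z j ≤ 0) ∨
    (0 < ∑ j, z j ∧ ∑ j, z j < -k ∧ ∀ j, 0 < z j)}

def blockSign (z : Fin nn → ℤ) : ℤ := (-1) ^ nn * ∏ j, sgnZ (z j)

lemma blockSign_of_nonpos (hz : ∀ j, z j ≤ 0) : blockSign z = 1 := by
  simp [blockSign, sgnZ, not_lt.2 (hz _), ← mul_pow]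

lemma blockSign_zero : blockSign (0 : Fin nn → ℤ) = 1 :=
  blockSign_of_nonpos fun _ => le_rfl

lemma blockSign_of_pos (hz : ∀ j, 0 < z j) : blockSign z = (-1) ^ nn := by
  simp [blockSign, sgnZ, hz]

lemma card_le_sum_of_pos (hz : ∀ j, 0 < z j) : (nn : ℤ) ≤ ∑ j, z j := by
  simpa using card_nsmul_le_sum univ z 1 fun j _ => hz j

lemma sum_le_of_nonpos (hz : ∀ j, z j ≤ 0) (i : Fin nn) : ∑ j, z j ≤ z i := by
  simpa using single_le_sum (f := fun j => -z j) (fun j _ => neg_nonneg.2 (hz j)) (mem_univ i)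

lemma le_sum_of_pos (hz : ∀ j, 0 < z j) (i : Fin nn) : z i ≤ ∑ j, z j :=
  single_le_sum (fun j _ => (hz j).le) (mem_univ i)

lemma finite_of_forall_mem_Icc {s : Set (Fin nn → ℤ)} (a b : ℤ)
    (h : ∀ z ∈ s, ∀ j, z j ∈ Set.Icc a b) : s.Finite :=
  (Set.finite_Icc (fun _ => a) fun _ => b).subset fun z hz =>
    ⟨fun j => (h z hz j).1, fun j => (h z hz j).2⟩

lemma deltaMinus_finite (nn : ℕ) (r : ℤ) : (DeltaMinus nn r).Finite :=
  finite_of_forall_mem_Icc (-r) 0 fun _ ⟨hz, hsum⟩ j =>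
    ⟨hsum ▸ sum_le_of_nonpos hz j, hz j⟩

lemma deltaPlus_finite (nn : ℕ) (r : ℤ) : (DeltaPlus nn r).Finite :=
  finite_of_forall_mem_Icc 0 r fun _ ⟨hz, hsum⟩ j =>
    ⟨(hz j).le, by linarith [le_sum_of_pos hz j]⟩

lemma blockSet_finite (nn : ℕ) (k : ℤ) : (blockSet nn k).Finite := by
  refine finite_of_forall_mem_Icc (-|k|) |k| fun z hz j => ?_
  rcases hz with ⟨hk, -, hz⟩ | ⟨-, hk, hz⟩
  · have := sum_le_of_nonpos hz j
    have := hz j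
    constructor <;> linarith [le_abs_self k, abs_nonneg k]
  · have := le_sum_of_pos hz j
    have := hz j
    constructor <;> linarith [neg_le_abs k]

lemma pairwiseDisjoint_deltaMinus (s : Set ℤ) : s.PairwiseDisjoint (DeltaMinus nn) :=
  fun _ _ _ _ hne => Set.disjoint_left.2 fun _ hz hz' => hne (neg_inj.1 (hz.2.symm.trans hz'.2))

lemma pairwiseDisjoint_deltaPlus (s : Set ℤ) : s.PairwiseDisjoint (DeltaPlus nn) :=
  fun _ _ _ _ hne => Set.disjoint_left.2 fun _ hz hz' =>
    hne (sub_left_inj.1 (hz.2.symm.trans hz'.2))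

lemma blockSet_of_nonneg {k : ℤ} (hk : 0 ≤ k) :
    blockSet nn k = ⋃ r ∈ Set.Icc 0 k, DeltaMinus nn r := by
  ext z
  simp only [blockSet, DeltaMinus, Set.mem_ofPred_eq, Set.mem_iUnion, Set.mem_Icc, exists_prop]
  constructor
  · rintro (⟨h₁, h₂, hz⟩ | ⟨h₁, h₂, -⟩)
    · exact ⟨-∑ j, z j, ⟨by linarith, by linarith⟩, hz, by ring⟩
    · linarith
  · rintro ⟨r, ⟨h₁, h₂⟩, hz, hsum⟩
    exact Or.inl ⟨by linarith, by linarith, hz⟩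

lemma blockSet_eq_empty {k : ℤ} (hk₀ : k < 0) (hk : -(nn : ℤ) ≤ k) :
    blockSet nn k = ∅ := by
  refine Set.eq_empty_of_forall_notMem fun z hz => ?_
  rcases hz with ⟨h₁, h₂, -⟩ | ⟨-, h₂, hz⟩
  · linarith
  · linarith [card_le_sum_of_pos hz]

lemma blockSet_of_lt (hnn : 0 < nn) {k : ℤ} (hk : k < -(nn : ℤ)) :
    blockSet nn k = ⋃ r ∈ Set.Icc ((nn : ℤ) + 1) (-k), DeltaPlus nn r := by
  have hnn' : (0 : ℤ) < nn := by exact_mod_cast hnn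
  ext z
  simp only [blockSet, DeltaPlus, Set.mem_ofPred_eq, Set.mem_iUnion, Set.mem_Icc, exists_prop]
  constructor
  · rintro (⟨h₁, h₂, -⟩ | ⟨-, h₂, hz⟩)
    · linarith
    · exact ⟨∑ j, z j + 1, ⟨by linarith [card_le_sum_of_pos hz], by linarith⟩, hz, by ring⟩
  · rintro ⟨r, ⟨h₁, h₂⟩, hz, hsum⟩
    exact Or.inr ⟨by linarith, by linarith, hz⟩

theorem finsum_blockSet_smul {M : Type*} [AddCommGroup M] [Module ℤ M] (hnn : 0 < nn) (k : ℤ)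
    (g : (Fin nn → ℤ) → M) :
    ∑ᶠ z ∈ blockSet nn k, blockSign z • g z =
      if 0 ≤ k then ∑ r ∈ Icc 0 k, ∑ᶠ z ∈ DeltaMinus nn r, g z
      else if -(nn : ℤ) ≤ k then 0
      else ∑ r ∈ Icc ((nn : ℤ) + 1) (-k), ∑ᶠ z ∈ DeltaPlus nn r, ((-1) ^ nn : ℤ) • g z := by
  split_ifs with h₀ h₁
  · rw [blockSet_of_nonneg h₀, ← coe_Icc, finsum_mem_biUnion (pairwiseDisjoint_deltaMinus _)
      (finite_toSet _) fun r _ => deltaMinus_finite nn r, finsum_mem_coe_finset]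
    exact sum_congr rfl fun r _ => finsum_mem_congr rfl fun z hz => by
      rw [blockSign_of_nonpos hz.1, one_smul]
  · rw [blockSet_eq_empty (not_le.1 h₀) h₁, finsum_mem_empty]
  · rw [blockSet_of_lt hnn (not_le.1 h₁), ← coe_Icc,
      finsum_mem_biUnion (pairwiseDisjoint_deltaPlus _) (finite_toSet _)
        fun r _ => deltaPlus_finite nn r, finsum_mem_coe_finset]
    exact sum_congr rfl fun r _ => finsum_mem_congr rfl fun z hz => by
      rw [blockSign_of_pos hz.1]

end Block

section Lattice

variable {m : ℕ} {n : Fin m → ℕ}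

def toLattice (x : J m n → ℤ) : L m n :=
  E m n (Sum.inr ()) + ∑ p : J m n, x p • E m n (Sum.inl p)

def block (x : J m n → ℤ) (i : Fin m) : Fin (n i) → ℤ := fun k => x ⟨i, k⟩

@[simp]
lemma block_apply (x : J m n → ℤ) (i : Fin m) (k : Fin (n i)) : block x i k = x ⟨i, k⟩ := rfl

@[simp]
lemma block_zero (i : Fin m) : block (0 : J m n → ℤ) i = 0 := rfl

def updateBlock (x : J m n → ℤ) (i : Fin m) (z : Fin (n i) → ℤ) : J m n → ℤ :=
  fun p => Function.update (block x) i z p.1 p.2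

@[simp]
lemma block_updateBlock (x : J m n → ℤ) (i : Fin m) (z : Fin (n i) → ℤ) :
    block (updateBlock x i z) = Function.update (block x) i z := rfl

lemma updateBlock_injective (x : J m n → ℤ) (i : Fin m) : Function.Injective (updateBlock x i) :=
  fun z z' h => by simpa using congr_fun (congr_arg block h) i

lemma toLattice_apply_inl (x : J m n → ℤ) (p : J m n) : toLattice x (Sum.inl p) = x p := by
  simp [toLattice, E, Finset.sum_apply]

lemma toLattice_apply_inr (x : J m n → ℤ) : toLattice x (Sum.inr ()) = 1 := by
  simp [toLattice, E, Finset.sum_apply]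

lemma emb_apply_inl (i j : Fin m) (z : Fin (n i) → ℤ) (k : Fin (n j)) :
    emb m n i z (Sum.inl ⟨j, k⟩) = (Pi.single i z : ∀ j, Fin (n j) → ℤ) j k := by
  by_cases h : j = i
  · subst h
    simp [emb, E, Finset.sum_apply]
  · simp [emb, E, Finset.sum_apply, h]

lemma emb_apply_inr (i : Fin m) (z : Fin (n i) → ℤ) : emb m n i z (Sum.inr ()) = 0 := by
  simp [emb, E, Finset.sum_apply]

lemma toLattice_updateBlock {x : J m n → ℤ} {i : Fin m} (hx : block x i = 0)
    (z : Fin (n i) → ℤ) : toLattice (updateBlock x i z) = toLattice x + emb m n i z := by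
  funext q
  rcases q with ⟨j, k⟩ | ⟨⟩
  · rw [Pi.add_apply, toLattice_apply_inl, toLattice_apply_inl, emb_apply_inl]
    by_cases h : j = i
    · subst h
      simpa [updateBlock] using congr_fun hx k
    · simp [updateBlock, h]
  · rw [Pi.add_apply, toLattice_apply_inr, toLattice_apply_inr, emb_apply_inr, add_zero]

lemma updateBlock_updateBlock (x : J m n → ℤ) (i : Fin m) (z w : Fin (n i) → ℤ) :
    updateBlock (updateBlock x i z) i w = updateBlock x i w := by
  funext p
  simp [updateBlock]

lemma updateBlock_block (x : J m n → ℤ) (i : Fin m) : updateBlock x i (block x i) = x := by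
  funext p
  simp [updateBlock]

lemma updateBlock_updateBlock_zero {x : J m n → ℤ} {i : Fin m} (hx : block x i = 0)
    (z : Fin (n i) → ℤ) : updateBlock (updateBlock x i z) i 0 = x := by
  rw [updateBlock_updateBlock, ← hx, updateBlock_block]

def density (x : J m n → ℤ) : ℤ := (-1) ^ (∑ i, n i) * ∏ p : J m n, sgnZ (x p)

lemma density_eq_prod_blockSign (x : J m n → ℤ) : density x = ∏ i, blockSign (block x i) := by
  rw [density, ← prod_pow_eq_pow_sum, ← univ_sigma_univ, prod_sigma, ← prod_mul_distrib]
  rfl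

lemma density_updateBlock {x : J m n → ℤ} {i : Fin m} (hx : block x i = 0)
    (z : Fin (n i) → ℤ) : density (updateBlock x i z) = blockSign z * density x := by
  rw [density_eq_prod_blockSign, density_eq_prod_blockSign, Fintype.prod_eq_mul_prod_compl i,
    Fintype.prod_eq_mul_prod_compl i, hx, blockSign_zero, one_mul,
    block_updateBlock, Function.update_self]
  congr 1
  exact prod_congr rfl fun j hj => by
    rw [Function.update_of_ne (by simpa using hj)]

end Lattice

section Cube

variable {m : ℕ} {n : Fin m → ℕ} (ℓ : Fin m → ℤ) (c : (i j : Fin m) → Fin (n j) → ℤ)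

lemma kfun_toLattice_congr {i : Fin m} {x y : J m n → ℤ}
    (h : ∀ j, i < j → block x j = block y j) :
    kfun m n ℓ c i (toLattice x) = kfun m n ℓ c i (toLattice y) := by
  simp only [kfun, toLattice_apply_inl]
  congr 1
  refine sum_congr rfl fun j _ => sum_congr rfl fun k _ => ?_
  split_ifs with hij
  · rw [← block_apply x, ← block_apply y, h j hij]
  · rfl

def IsAdmissibleBlock (x : J m n → ℤ) (i : Fin m) : Prop :=
  block x i ∈ blockSet (n i) (kfun m n ℓ c i (toLattice x))

lemma kfun_toLattice_updateBlock {i j : Fin m} (hij : i ≤ j) (x : J m n → ℤ)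
    (z : Fin (n i) → ℤ) :
    kfun m n ℓ c j (toLattice (updateBlock x i z)) = kfun m n ℓ c j (toLattice x) :=
  kfun_toLattice_congr ℓ c fun _ hj => by
    rw [block_updateBlock, Function.update_of_ne (hij.trans_lt hj).ne']

lemma isAdmissibleBlock_updateBlock_self (x : J m n → ℤ) (i : Fin m) (z : Fin (n i) → ℤ) :
    IsAdmissibleBlock ℓ c (updateBlock x i z) i ↔
      z ∈ blockSet (n i) (kfun m n ℓ c i (toLattice x)) := by
  rw [IsAdmissibleBlock, block_updateBlock, Function.update_self,
    kfun_toLattice_updateBlock ℓ c le_rfl]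

lemma isAdmissibleBlock_updateBlock_of_lt {i j : Fin m} (hij : i < j) (x : J m n → ℤ)
    (z : Fin (n i) → ℤ) :
    IsAdmissibleBlock ℓ c (updateBlock x i z) j ↔ IsAdmissibleBlock ℓ c x j := by
  rw [IsAdmissibleBlock, IsAdmissibleBlock, block_updateBlock, Function.update_of_ne hij.ne',
    kfun_toLattice_updateBlock ℓ c hij.le]

def cubeTail (t : ℕ) : Set (J m n → ℤ) :=
  {x | (∀ i : Fin m, (i : ℕ) < t → block x i = 0) ∧
    ∀ i : Fin m, t ≤ i → IsAdmissibleBlock ℓ c x i}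

lemma block_eq_zero_of_mem_cubeTail_succ {x : J m n → ℤ} {i : Fin m}
    (hx : x ∈ cubeTail ℓ c (i + 1)) : block x i = 0 :=
  hx.1 i (Nat.lt_succ_self i)

lemma cubeTail_eq_biUnion (i : Fin m) :
    cubeTail ℓ c i = ⋃ x ∈ cubeTail ℓ c (i + 1),
      updateBlock x i '' blockSet (n i) (kfun m n ℓ c i (toLattice x)) := by
  ext y
  simp only [Set.mem_iUnion, Set.mem_image, exists_prop]
  constructor
  · rintro ⟨hzero, hadm⟩
    refine ⟨updateBlock y i 0, ⟨fun j hj => ?_, fun j hj => ?_⟩, block y i, ?_,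
      by rw [updateBlock_updateBlock, updateBlock_block]⟩
    · rcases eq_or_ne j i with rfl | hji
      · simp
      · rw [block_updateBlock, Function.update_of_ne hji]
        exact hzero j (by omega)
    · exact (isAdmissibleBlock_updateBlock_of_lt ℓ c (by omega) _ _).2 (hadm j (by omega))
    · rw [← isAdmissibleBlock_updateBlock_self, updateBlock_updateBlock, updateBlock_block]
      exact hadm i le_rfl
  · rintro ⟨x, ⟨hzero, hadm⟩, z, hz, rfl⟩
    refine ⟨fun j hj => ?_, fun j hj => ?_⟩
    · rw [block_updateBlock, Function.update_of_ne (Fin.ne_of_lt hj)]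
      exact hzero j (by omega)
    · rcases hj.eq_or_lt with hji | hij
      · obtain rfl : i = j := Fin.ext hji
        rwa [isAdmissibleBlock_updateBlock_self]
      · exact (isAdmissibleBlock_updateBlock_of_lt ℓ c hij _ _).2 (hadm j hij)

lemma pairwiseDisjoint_image_updateBlock (i : Fin m) :
    (cubeTail ℓ c (i + 1)).PairwiseDisjoint
      fun x => updateBlock x i '' blockSet (n i) (kfun m n ℓ c i (toLattice x)) := by
  rintro x hx x' hx' hne
  refine Set.disjoint_left.2 ?_
  rintro _ ⟨z, -, rfl⟩ ⟨z', -, hy⟩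
  apply hne
  rw [← updateBlock_updateBlock_zero (block_eq_zero_of_mem_cubeTail_succ ℓ c hx) z,
    ← updateBlock_updateBlock_zero (block_eq_zero_of_mem_cubeTail_succ ℓ c hx') z', hy]

lemma cubeTail_self : cubeTail ℓ c m = {0} := by
  ext x
  refine ⟨fun hx => funext fun ⟨i, k⟩ => congr_fun (hx.1 i i.isLt) k, ?_⟩
  rintro rfl
  exact ⟨fun _ _ => rfl, fun i hi => absurd i.isLt (by omega)⟩

lemma cubeTail_finite {t : ℕ} (ht : t ≤ m) : (cubeTail ℓ c t).Finite := by
  induction ht using Nat.decreasingInduction with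
  | self => simp [cubeTail_self]
  | of_succ t ht ih =>
    rw [show t = ((⟨t, ht⟩ : Fin m) : ℕ) from rfl, cubeTail_eq_biUnion]
    exact ih.biUnion fun x _ => (blockSet_finite _ _).image _

lemma Dsingle_eq_finsum {i : Fin m} (hni : 0 < n i) (μ : L m n) :
    Dsingle m n ℓ c i μ = ∑ᶠ z ∈ blockSet (n i) (kfun m n ℓ c i μ),
      blockSign z • lam m n (μ + emb m n i z) := by
  rw [finsum_blockSet_smul hni]
  rfl

lemma Dop_finsum_mem {α : Type*} {s : Set α} (hs : s.Finite) (i : Fin m) (a : α → ℤ)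
    (μ : α → L m n) :
    Dop m n ℓ c i (∑ᶠ x ∈ s, a x • lam m n (μ x)) =
      ∑ᶠ x ∈ s, a x • Dsingle m n ℓ c i (μ x) := by
  let D : AddMonoidAlgebra ℤ (L m n) →ₗ[ℤ] AddMonoidAlgebra ℤ (L m n) :=
    Finsupp.lsum ℤ (fun μ => LinearMap.toSpanSingleton ℤ _ (Dsingle m n ℓ c i μ)) ∘ₗ
      (AddMonoidAlgebra.coeffLinearEquiv ℤ).toLinearMap
  exact (D.toAddMonoidHom.map_finsum_mem _ hs).trans
    (finsum_mem_congr rfl fun x _ => by simp [D, lam])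

lemma Dop_finsum_cubeTail_succ {i : Fin m} (hni : 0 < n i)
    (hfin : (cubeTail ℓ c (i + 1)).Finite) :
    Dop m n ℓ c i (∑ᶠ x ∈ cubeTail ℓ c (i + 1), density x • lam m n (toLattice x)) =
      ∑ᶠ y ∈ cubeTail ℓ c i, density y • lam m n (toLattice y) := by
  rw [Dop_finsum_mem ℓ c hfin, cubeTail_eq_biUnion,
    finsum_mem_biUnion (pairwiseDisjoint_image_updateBlock ℓ c i) hfin
      fun x _ => (blockSet_finite _ _).image _]
  refine finsum_mem_congr rfl fun x hx => ?_
  have hxi := block_eq_zero_of_mem_cubeTail_succ ℓ c hx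
  rw [finsum_mem_image (updateBlock_injective x i).injOn, Dsingle_eq_finsum ℓ c hni,
    smul_finsum_mem (blockSet_finite _ _)]
  refine finsum_mem_congr rfl fun z _ => ?_
  rw [density_updateBlock hxi, toLattice_updateBlock hxi, smul_smul, mul_comm]

theorem foldr_drop_Dop_lam (hn : ∀ i, 0 < n i) {t : ℕ} (ht : t ≤ m) :
    ((List.ofFn fun i : Fin m => Dop m n ℓ c i).drop t).foldr (· ∘ ·) id
        (lam m n (E m n (Sum.inr ()))) =
      ∑ᶠ x ∈ cubeTail ℓ c t, density x • lam m n (toLattice x) := by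
  induction ht using Nat.decreasingInduction with
  | self =>
    have htoLattice : toLattice (0 : J m n → ℤ) = E m n (Sum.inr ()) := by simp [toLattice]
    rw [List.drop_of_length_le (by simp), cubeTail_self, finsum_mem_singleton, htoLattice,
      density_eq_prod_blockSign]
    simp [blockSign_zero]
  | of_succ t ht ih =>
    rw [List.drop_eq_getElem_cons (by simpa using ht), List.foldr_cons, List.getElem_ofFn,
      Function.comp_apply, ih]
    exact Dop_finsum_cubeTail_succ ℓ c (i := ⟨t, ht⟩) (hn _) (cubeTail_finite ℓ c ht)

lemma A_intCast (x : J m n → ℤ) (i : Fin m) :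
    A m n ℓ c (fun p => (x p : ℝ)) i = -(kfun m n ℓ c i (toLattice x) : ℝ) := by
  simp [A, kfun, toLattice_apply_inl, apply_ite (Int.cast : ℤ → ℝ)]

lemma intCast_mem_C_iff (x : J m n → ℤ) :
    (fun p => (x p : ℝ)) ∈ C m n ℓ c ↔ x ∈ cubeTail ℓ c 0 := by
  simp only [C, cubeTail, Set.mem_ofPred_eq, A_intCast, Nat.not_lt_zero, false_imp_iff,
    implies_true, Nat.zero_le, forall_const, true_and, IsAdmissibleBlock, blockSet, block]
  norm_cast

lemma rho_intCast {x : J m n → ℤ} (hx : (fun p => (x p : ℝ)) ∈ C m n ℓ c) :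
    rho m n ℓ c (fun p => (x p : ℝ)) = density x := by
  simp [rho, hx, density, sgnR, sgnZ]

end Cube

end GB

theorem gbott_demazure_eq_density_sum_general
    (m : ℕ) (n : Fin m → ℕ) (hn : ∀ i, 1 ≤ n i)
    (ℓ : Fin m → ℤ) (c : (i j : Fin m) → Fin (n j) → ℤ) :
    {x : GB.J m n → ℤ | (fun p => (x p : ℝ)) ∈ GB.C m n ℓ c}.Finite ∧
    (List.ofFn fun i : Fin m => GB.Dop m n ℓ c i).foldr (· ∘ ·) id
        (GB.lam m n (GB.E m n (Sum.inr ()))) =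
      ∑ᶠ x ∈ {x : GB.J m n → ℤ | (fun p => (x p : ℝ)) ∈ GB.C m n ℓ c},
        GB.rho m n ℓ c (fun p => (x p : ℝ)) •
          GB.lam m n (GB.E m n (Sum.inr ()) + ∑ p : GB.J m n, x p • GB.E m n (Sum.inl p)) := by
  have hC : {x : GB.J m n → ℤ | (fun p => (x p : ℝ)) ∈ GB.C m n ℓ c} = GB.cubeTail ℓ c 0 :=
    Set.ext (GB.intCast_mem_C_iff ℓ c)
  refine ⟨hC ▸ GB.cubeTail_finite ℓ c m.zero_le, ?_⟩
  have hD := GB.foldr_drop_Dop_lam ℓ c hn m.zero_le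
  rw [List.drop_zero] at hD
  rw [hD, hC]
  exact finsum_mem_congr rfl fun x hx => by
    rw [GB.rho_intCast ℓ c ((GB.intCast_mem_C_iff ℓ c x).2 hx)]
    rfl

/-- `D_1 ⋯ D_m(λ^{e_{m+1}}) = Σ_{x ∈ C ∩ ℤ^N} ρ(x) λ^{x + e_{m+1}}`,
and the set of lattice points of `C` is finite (so the sum has finitely many
nonzero terms). -/
theorem gbott_demazure_eq_density_sum
    (m : ℕ) (hm : 1 ≤ m) (n : Fin m → ℕ) (hn : ∀ i, 1 ≤ n i)
    (ℓ : Fin m → ℤ) (c : (i j : Fin m) → Fin (n j) → ℤ) :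
    {x : GB.J m n → ℤ | (fun p => (x p : ℝ)) ∈ GB.C m n ℓ c}.Finite ∧
    (List.ofFn fun i : Fin m => GB.Dop m n ℓ c i).foldr (· ∘ ·) id
        (GB.lam m n (GB.E m n (Sum.inr ()))) =
      ∑ᶠ x ∈ {x : GB.J m n → ℤ | (fun p => (x p : ℝ)) ∈ GB.C m n ℓ c},
        GB.rho m n ℓ c (fun p => (x p : ℝ)) •
          GB.lam m n (GB.E m n (Sum.inr ()) + ∑ p : GB.J m n, x p • GB.E m n (Sum.inl p)) :=
  gbott_demazure_eq_density_sum_general m n hn ℓ c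
end

section
/- The generalized twisted cube C is a bounded subset of ℝ^N; in particular, C contains only finitely many lattice points of ℤ^N. -/
/-! All coordinates of block `i` of a point of `C` share one sign and sum to a number between `0`
and `A_i(x)`, so each is bounded by `|A_i(x)|`. Since `A_i` only involves the blocks `j > i`,
bounds on the coordinates propagate from the last block down to the first. -/

open Bornology

theorem finite_setOf_intCast_mem_of_isBounded {ι : Type*} [Fintype ι] {S : Set (ι → ℝ)}
    (hS : IsBounded S) : {x : ι → ℤ | (fun i => (x i : ℝ)) ∈ S}.Finite := by
  have hT : IsBounded {x : ι → ℤ | (fun i => (x i : ℝ)) ∈ S} := by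
    refine forall_isBounded_image_eval_iff.1 fun i => ?_
    refine (Real.isometry_intCast.antilipschitz.isBounded_preimage
      (forall_isBounded_image_eval_iff.2 hS i)).subset ?_
    rintro _ ⟨x, hx, rfl⟩
    exact ⟨_, hx, rfl⟩
  simpa using Metric.finite_isBounded_inter_isClosed DiscreteTopology.isDiscrete hT isClosed_univ

namespace GB

variable {m : ℕ} {n : Fin m → ℕ} {ℓ : Fin m → ℤ} {c : (i j : Fin m) → Fin (n j) → ℤ}

theorem abs_le_abs_A_of_mem_C {x : J m n → ℝ} (hx : x ∈ C m n ℓ c) (i : Fin m) (k : Fin (n i)) :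
    |x ⟨i, k⟩| ≤ |A m n ℓ c x i| := by
  rcases hx i with ⟨hA, hsum, hneg⟩ | ⟨-, hsum, hpos⟩
  · have : -x ⟨i, k⟩ ≤ ∑ k', -x ⟨i, k'⟩ :=
      Finset.single_le_sum (fun k' _ => neg_nonneg.2 (hneg k')) (Finset.mem_univ k)
    rw [Finset.sum_neg_distrib] at this
    exact abs_le_abs_of_nonpos (hneg k) (by linarith)
  · have : x ⟨i, k⟩ ≤ ∑ k', x ⟨i, k'⟩ :=
      Finset.single_le_sum (fun k' _ => (hpos k').le) (Finset.mem_univ k)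
    exact abs_le_abs_of_nonneg (hpos k).le (by linarith)

theorem abs_A_le (x : J m n → ℝ) (i : Fin m) :
    |A m n ℓ c x i| ≤
      |(ℓ i : ℝ)| + ∑ j, ∑ k, if i < j then |(c i j k : ℝ)| * |x ⟨j, k⟩| else 0 := by
  rw [A, abs_neg]
  refine (abs_add_le _ _).trans (add_le_add_right ?_ _)
  refine (Finset.abs_sum_le_sum_abs _ _).trans (Finset.sum_le_sum fun j _ => ?_)
  refine (Finset.abs_sum_le_sum_abs _ _).trans (Finset.sum_le_sum fun k _ => ?_)
  split_ifs <;> simp [abs_mul]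

variable (ℓ c) in
def cubeBound (i : Fin m) : ℝ :=
  |(ℓ i : ℝ)| + ∑ j, ∑ k : Fin (n j), if i < j then |(c i j k : ℝ)| * cubeBound j else 0
termination_by m - (i : ℕ)
decreasing_by omega

theorem abs_le_cubeBound {x : J m n → ℝ} (hx : x ∈ C m n ℓ c) (i : Fin m) (k : Fin (n i)) :
    |x ⟨i, k⟩| ≤ cubeBound ℓ c i := by
  induction i using WellFoundedGT.induction with
  | _ i ih =>
    calc |x ⟨i, k⟩| ≤ |A m n ℓ c x i| := abs_le_abs_A_of_mem_C hx i k
      _ ≤ |(ℓ i : ℝ)| + ∑ j, ∑ k, if i < j then |(c i j k : ℝ)| * |x ⟨j, k⟩| else 0 :=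
        abs_A_le x i
      _ ≤ cubeBound ℓ c i := by
        rw [cubeBound]
        gcongr with j _ k' _
        split_ifs with hij
        · exact mul_le_mul_of_nonneg_left (ih j hij k') (abs_nonneg _)
        · rfl

theorem isBounded_C : IsBounded (C m n ℓ c) := by
  refine (IsBounded.pi fun p : J m n => Metric.isBounded_Icc (-cubeBound ℓ c p.1)
    (cubeBound ℓ c p.1)).subset fun x hx p _ => ?_
  exact abs_le.1 (abs_le_cubeBound hx p.1 p.2)

end GB

theorem gbott_cube_bounded_general
    (m : ℕ) (n : Fin m → ℕ)
    (ℓ : Fin m → ℤ) (c : (i j : Fin m) → Fin (n j) → ℤ) :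
    Bornology.IsBounded (GB.C m n ℓ c) ∧
    {x : GB.J m n → ℤ | (fun p => (x p : ℝ)) ∈ GB.C m n ℓ c}.Finite :=
  ⟨GB.isBounded_C, finite_setOf_intCast_mem_of_isBounded GB.isBounded_C⟩

/-- The generalized twisted cube `C ⊆ ℝ^N` is bounded; in particular
it contains only finitely many lattice points of `ℤ^N`. -/
theorem gbott_cube_bounded
    (m : ℕ) (hm : 1 ≤ m) (n : Fin m → ℕ) (hn : ∀ i, 1 ≤ n i)
    (ℓ : Fin m → ℤ) (c : (i j : Fin m) → Fin (n j) → ℤ) :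
    Bornology.IsBounded (GB.C m n ℓ c) ∧
    {x : GB.J m n → ℤ | (fun p => (x p : ℝ)) ∈ GB.C m n ℓ c}.Finite :=
  gbott_cube_bounded_general m n ℓ c
end

section
/- Let n ≥ 1, let I = (i_0, i_1, …, i_n) ∈ ℤ^{n+1}, and let f be a holomorphic (complex differentiable) function on ℂ^{n+1} \ {0} satisfying the semi-invariance f(t_0 z_0, t_1 z_1, …, t_n z_n) = t_0^{−i_0} t_1^{−i_1} ⋯ t_n^{−i_n} · f(z_0, …, z_n) for all (t_0,…,t_n) with |t_ℓ| = 1 for every ℓ and all (z_0,…,z_n) ∈ ℂ^{n+1} \ {0}. Then: (1) if some i_ℓ > 0, then f is identically zero; (2) if i_ℓ ≤ 0 for all ℓ, then there is a constant c ∈ ℂ with f(z_0,…,z_n) = c · z_0^{−i_0} z_1^{−i_1} ⋯ z_n^{−i_n} for all (z_0,…,z_n) ∈ ℂ^{n+1} \ {0}. (This computes the weight-I subspace of H^0((ℂ^{n+1})^×, 𝒪) under the (S^1)^{n+1}-action: it is spanned by the monomial z^{−I} when I ∈ ℤ_{≤0}^{n+1} and vanishes otherwise.) -/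
/-!
Restricting `f` to a coordinate line `w ↦ f (update y l w)` gives a function holomorphic on `ℂ \ {0}`
which, by the torus action, agrees with `f (update y l 1) * w ^ (-I l)` on the unit circle, hence
everywhere on `ℂ \ {0}` by the identity theorem. Peeling off the coordinates one at a time gives
`f z = f 1 * z ^ (-I)` on `(ℂ \ {0})^{n+1}`, which is dense in `ℂ^{n+1} \ {0}`. If `i_l > 0`, the line
through `1` in direction `l` stays away from the origin because `n ≥ 1`, so `f (update 1 l ·)` is
continuous at `0`, while `f 1 * w ^ (-i_l)` blows up there unless `f 1 = 0`.
-/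

open Complex Filter Function Metric Set Topology

theorem AnalyticOnNhd.eqOn_of_eqOn_sphere {U : Set ℂ} {f g : ℂ → ℂ}
    (hf : AnalyticOnNhd ℂ f U) (hg : AnalyticOnNhd ℂ g U) (hU : IsPreconnected U)
    {c : ℂ} {r : ℝ} (hr : 0 < r) (hsU : sphere c r ⊆ U) (hfg : EqOn f g (sphere c r)) :
    EqOn f g U := by
  have hinf : (sphere c r).Infinite := by
    refine (isPreconnected_sphere (by simp) c r).infinite_of_nontrivial
      ⟨c + r, by simp [abs_of_pos hr], c - r, by simp [abs_of_pos hr], ?_⟩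
    intro h
    have := congrArg re h
    simp at this
    linarith
  obtain ⟨z₀, hz₀, hacc⟩ := hinf.exists_accPt_of_subset_isCompact (isCompact_sphere c r) subset_rfl
  exact hf.eqOn_of_preconnected_of_frequently_eq hg hU (hsU hz₀)
    ((accPt_iff_frequently_nhdsNE.mp hacc).mono fun _ hz => hfg hz)

theorem eqOn_const_mul_zpow_of_eqOn_sphere {h : ℂ → ℂ} (hh : DifferentiableOn ℂ h {0}ᶜ)
    (a : ℂ) (k : ℤ) (hcirc : EqOn h (fun w => a * w ^ k) (sphere 0 1)) :
    EqOn h (fun w => a * w ^ k) {0}ᶜ :=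
  (hh.analyticOnNhd isOpen_compl_singleton).eqOn_of_eqOn_sphere
    ((differentiableOn_const a).mul (differentiableOn_zpow k _ (Or.inl (by simp)))
      |>.analyticOnNhd isOpen_compl_singleton)
    (isConnected_compl_singleton_of_one_lt_rank (by simp) 0).isPreconnected one_pos
    (fun w hw => by rintro rfl; simp at hw) hcirc

theorem eq_zero_of_continuousAt_of_eq_mul_zpow {h : ℂ → ℂ} {a : ℂ} {k : ℤ} (hk : k < 0)
    (hh : ContinuousAt h 0) (hzpow : ∀ w ≠ 0, h w = a * w ^ k) : a = 0 := by
  have hlim : Tendsto (fun w => h w * w ^ (-k)) (𝓝[≠] 0) (𝓝 0) := by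
    have hcont : ContinuousAt (fun w => h w * w ^ (-k)) 0 :=
      hh.mul (continuousAt_zpow₀ 0 (-k) (Or.inr (by omega)))
    have hk' : -k ≠ 0 := by omega
    simpa only [zero_zpow _ hk', mul_zero] using hcont.tendsto.mono_left nhdsWithin_le_nhds
  refine tendsto_nhds_unique (tendsto_const_nhds.congr' ?_) hlim
  filter_upwards [self_mem_nhdsWithin] with w hw
  rw [hzpow w hw, mul_assoc, ← zpow_add₀ hw, add_neg_cancel, zpow_zero, mul_one]

theorem eqOn_compl_zero_of_eqOn_pi {ι 𝕜 E : Type*} [Nonempty ι] [NontriviallyNormedField 𝕜]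
    [TopologicalSpace E] [T2Space E] {g₁ g₂ : (ι → 𝕜) → E}
    (h₁ : ContinuousOn g₁ {0}ᶜ) (h₂ : ContinuousOn g₂ {0}ᶜ)
    (h : EqOn g₁ g₂ (univ.pi fun _ => {0}ᶜ)) : EqOn g₁ g₂ {0}ᶜ :=
  h.of_subset_closure h₁ h₂
    (fun z hz hz0 => hz (Classical.arbitrary ι) trivial (by rw [mem_singleton_iff.mp hz0]; rfl))
    (by rw [(dense_pi univ fun _ _ => dense_compl_singleton 0).closure_eq]; exact subset_univ _)

section TorusAction

variable {ι : Type*} [Fintype ι] [DecidableEq ι]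

def IsTorusSemiInvariant (I : ι → ℤ) (f : (ι → ℂ) → ℂ) : Prop :=
  ∀ t z : ι → ℂ, (∀ l, ‖t l‖ = 1) → z ≠ 0 →
    f (fun l => t l * z l) = (∏ l, t l ^ (-(I l))) * f z

namespace IsTorusSemiInvariant

variable {I : ι → ℤ} {f : (ι → ℂ) → ℂ}

theorem apply_update_of_norm_eq_one (hf : IsTorusSemiInvariant I f) (y : ι → ℂ) (l : ι)
    {t : ℂ} (ht : ‖t‖ = 1) : f (update y l t) = f (update y l 1) * t ^ (-I l) := by
  have hy : update y l 1 ≠ 0 := fun h => one_ne_zero (α := ℂ) (by simpa using congrFun h l)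
  have key := hf (Pi.mulSingle l t) (update y l 1)
    (fun j => by by_cases hj : j = l <;> simp [hj, ht]) hy
  have hmul : (fun j => (Pi.mulSingle l t : ι → ℂ) j * update y l 1 j) = update y l t := by
    ext j; by_cases hj : j = l <;> simp [hj]
  rw [hmul, Fintype.prod_eq_single l fun j hj => by simp [Pi.mulSingle_eq_of_ne hj]] at key
  simpa [mul_comm] using key

theorem apply_update_of_ne_zero (hf : IsTorusSemiInvariant I f)
    (hd : DifferentiableOn ℂ f {0}ᶜ) (y : ι → ℂ) (l : ι) {w : ℂ} (hw : w ≠ 0) :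
    f (update y l w) = f (update y l 1) * w ^ (-I l) := by
  refine eqOn_const_mul_zpow_of_eqOn_sphere (fun v hv => ?_) _ _
    (fun t ht => hf.apply_update_of_norm_eq_one y l (by simpa using ht)) hw
  have hv' : update y l v ≠ 0 := fun h => hv (by simpa using congrFun h l)
  exact ((hd.differentiableAt (isOpen_compl_singleton.mem_nhds hv')).comp v
    (hasFDerivAt_update y v).differentiableAt).differentiableWithinAt

theorem eq_mul_prod_zpow (hf : IsTorusSemiInvariant I f) (hd : DifferentiableOn ℂ f {0}ᶜ)
    {z : ι → ℂ} (hz : ∀ j, z j ≠ 0) : f z = f 1 * ∏ j, z j ^ (-I j) := by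
  suffices ∀ s : Finset ι, f (s.piecewise z 1) = f 1 * ∏ j ∈ s, z j ^ (-I j) by
    simpa using this Finset.univ
  intro s
  induction s using Finset.induction_on with
  | empty => simp
  | insert l s hl ih =>
    have hfix : update (s.piecewise z 1) l 1 = s.piecewise z 1 :=
      update_eq_self_iff.mpr (by simp [hl])
    rw [Finset.piecewise_insert, hf.apply_update_of_ne_zero hd _ l (hz l), hfix, ih,
      Finset.prod_insert hl]
    ring

theorem apply_update_one_eq_zero (hf : IsTorusSemiInvariant I f)
    (hd : DifferentiableOn ℂ f {0}ᶜ) {y : ι → ℂ} {l : ι} (hl : 0 < I l)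
    (hy : update y l 0 ≠ 0) : f (update y l 1) = 0 :=
  eq_zero_of_continuousAt_of_eq_mul_zpow (k := -I l) (by omega)
    ((hd.continuousOn.continuousAt (isOpen_compl_singleton.mem_nhds hy)).comp
      (hasFDerivAt_update (𝕜 := ℂ) y 0).continuousAt)
    fun _ hw => hf.apply_update_of_ne_zero hd y l hw

end IsTorusSemiInvariant

end TorusAction

/-- Let `f` be holomorphic on `(ℂ^{n+1})^× = ℂ^{n+1} \ {0}` and
semi-invariant of weight `I = (i_0, …, i_n)` under the coordinatewise action of the
torus `(S¹)^{n+1}`, i.e. `f(t ⬝ z) = (Π_ℓ t_ℓ^{-i_ℓ}) f(z)` whenever all `|t_ℓ| = 1`.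
Then (1) if some `i_ℓ > 0`, `f` vanishes identically on `ℂ^{n+1} \ {0}`, and
(2) if all `i_ℓ ≤ 0`, `f` is a constant multiple of the monomial `z^{-I}`. -/
theorem weight_space_H0_punctured_Cn
    (n : ℕ) (hn : 1 ≤ n) (I : Fin (n + 1) → ℤ) (f : (Fin (n + 1) → ℂ) → ℂ)
    (hf : DifferentiableOn ℂ f {z : Fin (n + 1) → ℂ | z ≠ 0})
    (hinv : ∀ t z : Fin (n + 1) → ℂ, (∀ l, ‖t l‖ = 1) → z ≠ 0 →
      f (fun l => t l * z l) = (∏ l, t l ^ (-(I l))) * f z) :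
    ((∃ l, 0 < I l) → ∀ z : Fin (n + 1) → ℂ, z ≠ 0 → f z = 0) ∧
    ((∀ l, I l ≤ 0) → ∃ c : ℂ, ∀ z : Fin (n + 1) → ℂ, z ≠ 0 →
      f z = c * ∏ l, z l ^ (-(I l))) := by
  have hd : DifferentiableOn ℂ f {0}ᶜ := hf
  have hI : IsTorusSemiInvariant I f := hinv
  have hmonomial : EqOn f (fun z => f 1 * ∏ l, z l ^ (-(I l))) (univ.pi fun _ => {0}ᶜ) :=
    fun z hz => hI.eq_mul_prod_zpow hd fun j => hz j trivial
  constructor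
  · rintro ⟨l, hl⟩
    have : Nontrivial (Fin (n + 1)) := Fin.nontrivial_iff_two_le.mpr (by omega)
    obtain ⟨j, hj⟩ := exists_ne l
    have hf1 : f 1 = 0 := by
      simpa using hI.apply_update_one_eq_zero hd (y := 1) hl
        fun h => by simpa [hj] using congrFun h j
    exact eqOn_compl_zero_of_eqOn_pi hd.continuousOn continuousOn_const
      fun z hz => by simp [hmonomial hz, hf1]
  · intro hneg
    refine ⟨f 1, eqOn_compl_zero_of_eqOn_pi hd.continuousOn ?_ hmonomial⟩
    exact (continuous_const.mul (continuous_finsetProd _ fun l _ =>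
      (continuous_apply l).zpow₀ _ fun _ => Or.inr (by linarith [hneg l]))).continuousOn
end

section
/- For all nonzero complex numbers u, v, w such that every factor appearing in the denominators below is nonzero, the following identity holds: 1/((1−u^{−1})(1−v^{−1})(1−w^{−1})) + w^{−2}/((1−u^{−1})(1−v^{−1}w)(1−w)) + v^{−2}/((1−u^{−1})(1−v w^{−1})(1−v)) + u^{−1}/((1−u)(1−u^2 v^{−1})(1−u^{−1}w^{−1})) + u^{−3}w^{−2}/((1−u)(1−u^3 v^{−1} w)(1−u w)) + u^3 v^{−2}/((1−u)(1−u^{−3} v w^{−1})(1−u^{−2} v)) = 1 + u^{−1} + w^{−1} + u^{−1}w^{−1} + u^{−2}w^{−1} − u v^{−2} − u^2 v^{−2} + v^{−1}w^{−1} + w^{−2} + u^{−1}w^{−2} + u^{−2}w^{−2} + u^{−3}w^{−2}. (This is the agreement, for the parameters m = 2, n_1 = 1, n_2 = 2, ℓ_1 = 1, ℓ_2 = 2, c_{1,2}^{(1)} = 2, c_{1,2}^{(2)} = −1, of the Atiyah–Bott localization expression for the character with the Demazure-type formula; here u, v, w stand for λ^{e_{1,1}}, λ^{e_{2,1}}, λ^{e_{2,2}}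 after factoring out λ^{e_3}.) -/
set_option maxHeartbeats 4000000


/-- Agreement of the Atiyah–Bott localization expression with the
Demazure-type character formula for `m = 2, n₁ = 1, n₂ = 2, ℓ₁ = 1, ℓ₂ = 2,
c₁₂⁽¹⁾ = 2, c₁₂⁽²⁾ = -1`; here `u, v, w` stand for `λ^{e_{1,1}}, λ^{e_{2,1}},
λ^{e_{2,2}}` after factoring out `λ^{e₃}`. -/
theorem localization_eq_demazure_example
    (u v w : ℂ) (hu : u ≠ 0) (hv : v ≠ 0) (hw : w ≠ 0)
    (h1 : 1 - u⁻¹ ≠ 0) (h2 : 1 - v⁻¹ ≠ 0) (h3 : 1 - w⁻¹ ≠ 0)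
    (h4 : 1 - v⁻¹ * w ≠ 0) (h5 : 1 - w ≠ 0)
    (h6 : 1 - v * w⁻¹ ≠ 0) (h7 : 1 - v ≠ 0)
    (h8 : 1 - u ≠ 0) (h9 : 1 - u ^ 2 * v⁻¹ ≠ 0) (h10 : 1 - u⁻¹ * w⁻¹ ≠ 0)
    (h11 : 1 - u ^ 3 * v⁻¹ * w ≠ 0) (h12 : 1 - u * w ≠ 0)
    (h13 : 1 - u ^ (-3 : ℤ) * v * w⁻¹ ≠ 0) (h14 : 1 - u ^ (-2 : ℤ) * v ≠ 0) :
    1 / ((1 - u⁻¹) * (1 - v⁻¹) * (1 - w⁻¹)) +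
      w ^ (-2 : ℤ) / ((1 - u⁻¹) * (1 - v⁻¹ * w) * (1 - w)) +
      v ^ (-2 : ℤ) / ((1 - u⁻¹) * (1 - v * w⁻¹) * (1 - v)) +
      u⁻¹ / ((1 - u) * (1 - u ^ 2 * v⁻¹) * (1 - u⁻¹ * w⁻¹)) +
      u ^ (-3 : ℤ) * w ^ (-2 : ℤ) / ((1 - u) * (1 - u ^ 3 * v⁻¹ * w) * (1 - u * w)) +
      u ^ 3 * v ^ (-2 : ℤ) /
        ((1 - u) * (1 - u ^ (-3 : ℤ) * v * w⁻¹) * (1 - u ^ (-2 : ℤ) * v)) =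
    1 + u⁻¹ + w⁻¹ + u⁻¹ * w⁻¹ + u ^ (-2 : ℤ) * w⁻¹ - u * v ^ (-2 : ℤ) -
      u ^ 2 * v ^ (-2 : ℤ) + v⁻¹ * w⁻¹ + w ^ (-2 : ℤ) + u⁻¹ * w ^ (-2 : ℤ) +
      u ^ (-2 : ℤ) * w ^ (-2 : ℤ) + u ^ (-3 : ℤ) * w ^ (-2 : ℤ) := by
  have pm : ∀ a b : ℂ, 1 - a * b⁻¹ ≠ 0 → b ≠ 0 → b - a ≠ 0 := by
    intro a b h hb he
    apply h
    field_simp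
    first | linear_combination he | linear_combination -he
  have A1 : u - 1 ≠ 0 := fun h => h8 (by linear_combination -h)
  have A2 : v - 1 ≠ 0 := fun h => h7 (by linear_combination -h)
  have A3 : w - 1 ≠ 0 := fun h => h5 (by linear_combination -h)
  have A4 : v - w ≠ 0 := by
    have := pm w v (by rw [mul_comm]; exact h4) hv
    exact this
  have A6 : w - v ≠ 0 := fun h => A4 (by linear_combination -h)
  have A9 : v - u ^ 2 ≠ 0 := pm (u^2) v (by rw [mul_comm] at h9 ⊢; exact h9) hv
  have A10 : u * w - 1 ≠ 0 := by
    intro h; apply h10; field_simp; first | linear_combination h | linear_combination -h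
  have A11 : v - u ^ 3 * w ≠ 0 := by
    intro h; apply h11; field_simp
    first | linear_combination h | linear_combination -h
  have H13 : u ^ 3 * w - v ≠ 0 := fun h => A11 (by linear_combination -h)
  have H14 : u ^ 2 - v ≠ 0 := fun h => A9 (by linear_combination -h)
  simp only [zpow_neg, zpow_ofNat]
  have hD : u^3*v^2*w^2*((1-u)*(1-v)*(1-w)*(v-w)*(1-u*w)*(v-u^2)*(v-u^3*w)) ≠ 0 := by
    exact mul_ne_zero (mul_ne_zero (mul_ne_zero (pow_ne_zero 3 hu) (pow_ne_zero 2 hv))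
      (pow_ne_zero 2 hw))
      (mul_ne_zero (mul_ne_zero (mul_ne_zero (mul_ne_zero (mul_ne_zero
        (mul_ne_zero h8 h7) h5) A4) h12) A9) A11)
  set D := u^3*v^2*w^2*((1-u)*(1-v)*(1-w)*(v-w)*(1-u*w)*(v-u^2)*(v-u^3*w)) with hDdef
  have T1 : D * (1 / ((1 - u⁻¹) * (1 - v⁻¹) * (1 - w⁻¹)))
      = -(u^4*v^3*w^3*(v-w)*(1-u*w)*(v-u^2)*(v-u^3*w)) := by
    rw [hDdef]; field_simp; ring
  have T2 : D * ((w^2)⁻¹ / ((1 - u⁻¹) * (1 - v⁻¹ * w) * (1 - w)))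
      = -(u^4*v^3*(1-v)*(1-u*w)*(v-u^2)*(v-u^3*w)) := by
    rw [hDdef]; field_simp; ring
  have T3 : D * ((v^2)⁻¹ / ((1 - u⁻¹) * (1 - v * w⁻¹) * (1 - v)))
      = u^4*w^3*(1-w)*(1-u*w)*(v-u^2)*(v-u^3*w) := by
    rw [hDdef]; field_simp; ring
  have T4 : D * (u⁻¹ / ((1 - u) * (1 - u ^ 2 * v⁻¹) * (1 - u⁻¹ * w⁻¹)))
      = -(u^3*v^3*w^3*(1-v)*(1-w)*(v-w)*(v-u^3*w)) := by
    rw [hDdef]; field_simp; ring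
  have T5 : D * ((u^3)⁻¹ * (w^2)⁻¹ / ((1 - u) * (1 - u ^ 3 * v⁻¹ * w) * (1 - u * w)))
      = v^3*(1-v)*(1-w)*(v-w)*(v-u^2) := by
    rw [hDdef]; field_simp
  have T6 : D * (u ^ 3 * (v^2)⁻¹ / ((1 - u) * (1 - (u^3)⁻¹ * v * w⁻¹) * (1 - (u^2)⁻¹ * v)))
      = u^11*w^3*(1-v)*(1-w)*(v-w)*(1-u*w) := by
    rw [hDdef]; field_simp; ring
  have m1 : u^3*v^2*w^2 * u⁻¹ = u^2*v^2*w^2 := by field_simp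
  have m2 : u^3*v^2*w^2 * w⁻¹ = u^3*v^2*w := by field_simp
  have m3 : u^3*v^2*w^2 * (u⁻¹*w⁻¹) = u^2*v^2*w := by field_simp
  have m4 : u^3*v^2*w^2 * ((u^2)⁻¹*w⁻¹) = u*v^2*w := by field_simp
  have m5 : u^3*v^2*w^2 * (u*(v^2)⁻¹) = u^4*w^2 := by field_simp
  have m6 : u^3*v^2*w^2 * (u^2*(v^2)⁻¹) = u^5*w^2 := by field_simp
  have m7 : u^3*v^2*w^2 * (v⁻¹*w⁻¹) = u^3*v*w := by field_simp
  have m8 : u^3*v^2*w^2 * (w^2)⁻¹ = u^3*v^2 := by field_simp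
  have m9 : u^3*v^2*w^2 * (u⁻¹*(w^2)⁻¹) = u^2*v^2 := by field_simp
  have m10 : u^3*v^2*w^2 * ((u^2)⁻¹*(w^2)⁻¹) = u*v^2 := by field_simp
  have m11 : u^3*v^2*w^2 * ((u^3)⁻¹*(w^2)⁻¹) = v^2 := by field_simp
  have S : u^3*v^2*w^2 * (1 + u⁻¹ + w⁻¹ + u⁻¹ * w⁻¹ + (u^2)⁻¹ * w⁻¹ - u * (v^2)⁻¹ -
      u ^ 2 * (v^2)⁻¹ + v⁻¹ * w⁻¹ + (w^2)⁻¹ + u⁻¹ * (w^2)⁻¹ +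
      (u^2)⁻¹ * (w^2)⁻¹ + (u^3)⁻¹ * (w^2)⁻¹)
      = u^3*v^2*w^2+u^2*v^2*w^2+u^3*v^2*w+u^2*v^2*w+u*v^2*w-u^4*w^2-u^5*w^2
          +u^3*v*w+u^3*v^2+u^2*v^2+u*v^2+v^2 := by
    linear_combination m1+m2+m3+m4-m5-m6+m7+m8+m9+m10+m11
  have T7 : D * (1 + u⁻¹ + w⁻¹ + u⁻¹ * w⁻¹ + (u^2)⁻¹ * w⁻¹ - u * (v^2)⁻¹ -
      u ^ 2 * (v^2)⁻¹ + v⁻¹ * w⁻¹ + (w^2)⁻¹ + u⁻¹ * (w^2)⁻¹ +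
      (u^2)⁻¹ * (w^2)⁻¹ + (u^3)⁻¹ * (w^2)⁻¹)
      = ((1-u)*(1-v)*(1-w)*(v-w)*(1-u*w)*(v-u^2)*(v-u^3*w)) *
        (u^3*v^2*w^2+u^2*v^2*w^2+u^3*v^2*w+u^2*v^2*w+u*v^2*w-u^4*w^2-u^5*w^2
          +u^3*v*w+u^3*v^2+u^2*v^2+u*v^2+v^2) := by
    rw [hDdef]
    linear_combination ((1-u)*(1-v)*(1-w)*(v-w)*(1-u*w)*(v-u^2)*(v-u^3*w)) * S
  refine mul_left_cancel₀ hD ?_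
  linear_combination T1 + T2 + T3 + T4 + T5 + T6 - T7
end
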